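/- arXiv:2602.15670 — 3 statements merged into one kernel-verified Lean document; each statement's English description precedes it below -/
import Mathlib

section
/- Let f be smooth with zero average on T^2, ||f||_{L^1} ≤ M, and suppose M_f(r) ≤ A |log r|^{-1/2} for all r ∈ (0,1/2). Then there exists C depending only on M, A such that ||f||_{L^2}^2 ≤ C ||∇f||_{L^2} / (1 + |log ||∇f||_{L^2}|)^{1/4}. -/
open MeasureTheory Metric Real Set Filter

noncomputable section

abbrev E2 : Type := EuclideanSpace ℝ (Fin 2)

def Q : Set E2 := {x : E2 | x 0 ∈ Set.Icc (0:ℝ) 1 ∧ x 1 ∈ Set.Icc (0:ℝ) 1}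

def TPeriodic (f : E2 → ℝ) : Prop :=
  ∀ x : E2, f (x + EuclideanSpace.single 0 1) = f x ∧ f (x + EuclideanSpace.single 1 1) = f x

def L1norm (f : E2 → ℝ) : ℝ := ∫ x in Q, |f x|
def L2sq (f : E2 → ℝ) : ℝ := ∫ x in Q, (f x) ^ 2
def GradL2sq (f : E2 → ℝ) : ℝ := ∫ x in Q, ‖fderiv ℝ f x‖ ^ 2
def Mball (f : E2 → ℝ) (r : ℝ) : ℝ := ⨆ x : E2, ∫ y in Metric.ball x r, |f y|

-- the measurable equiv to ℝ × ℝ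
def e2 : E2 ≃ᵐ ℝ × ℝ :=
  (MeasurableEquiv.toLp 2 (Fin 2 → ℝ)).symm.trans MeasurableEquiv.finTwoArrow

lemma e2_mp : MeasurePreserving e2 volume volume :=
  (EuclideanSpace.volume_preserving_symm_measurableEquiv_toLp (Fin 2)).trans
    (volume_preserving_finTwoArrow ℝ)

lemma e2_apply (x : E2) : e2 x = (x 0, x 1) := rfl

lemma e2_symm_apply (p : ℝ × ℝ) (i : Fin 2) : e2.symm p i = ![p.1, p.2] i := rfl

lemma e2_symm_add (p q : ℝ × ℝ) : e2.symm (p + q) = e2.symm p + e2.symm q := by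
  have : ∀ i : Fin 2, e2.symm (p + q) i = (e2.symm p + e2.symm q) i := by
    intro i
    fin_cases i <;> simp [e2_symm_apply]
  exact WithLp.ofLp_injective 2 (funext this)

def QR : Set (ℝ × ℝ) := Icc (0:ℝ) 1 ×ˢ Icc (0:ℝ) 1

lemma Q_preimage : Q = e2 ⁻¹' QR := rfl

lemma measurableSet_Q : MeasurableSet Q := by
  rw [Q_preimage]
  exact e2.measurable (measurableSet_Icc.prod measurableSet_Icc)

lemma isCompact_QR : IsCompact QR := isCompact_Icc.prod isCompact_Icc

lemma volume_Q : volume Q = 1 := by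
  rw [Q_preimage, e2_mp.measure_preimage]
  · rw [QR, Measure.volume_eq_prod, Measure.prod_prod, Real.volume_Icc]
    norm_num
  · exact (measurableSet_Icc.prod measurableSet_Icc).nullMeasurableSet

-- transfer of set integrals
lemma integral_Q_transfer (g : E2 → ℝ) :
    ∫ x in Q, g x = ∫ p in QR, g (e2.symm p) := by
  rw [Q_preimage]
  have := e2_mp.setIntegral_preimage_emb e2.measurableEmbedding
    (fun p => g (e2.symm p)) QR
  simpa using this

-- 1D periodic shift
lemma shift1d (u : ℝ → ℝ) (hp : Function.Periodic u 1) (a : ℝ) :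
    ∫ x in Icc (0:ℝ) 1, u (x + a) = ∫ x in Icc (0:ℝ) 1, u x := by
  rw [MeasureTheory.integral_Icc_eq_integral_Ioc,
    MeasureTheory.integral_Icc_eq_integral_Ioc,
    ← intervalIntegral.integral_of_le (zero_le_one), ← intervalIntegral.integral_of_le (zero_le_one),
    intervalIntegral.integral_comp_add_right u a]
  have := hp.intervalIntegral_add_eq a 0
  rw [zero_add] at this
  rw [zero_add, add_comm (1:ℝ) a]
  exact this

-- continuity of e2.symm
lemma continuous_e2_symm : Continuous fun p : ℝ × ℝ => e2.symm p := by
  have : (fun p : ℝ × ℝ => e2.symm p)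
      = fun p => (EuclideanSpace.equiv (Fin 2) ℝ).symm ![p.1, p.2] := by
    funext p
    ext i
    fin_cases i <;> rfl
  rw [this]
  refine (EuclideanSpace.equiv (Fin 2) ℝ).symm.continuous.comp ?_
  refine continuous_pi fun i => ?_
  fin_cases i
  · exact continuous_fst
  · exact continuous_snd

-- 2D periodic shift
lemma shift2d (U : ℝ × ℝ → ℝ) (hU : Continuous U)
    (h1 : ∀ p, U (p + ((1:ℝ),(0:ℝ))) = U p) (h2 : ∀ p, U (p + ((0:ℝ),(1:ℝ))) = U p)
    (w : ℝ × ℝ) : ∫ p in QR, U (p + w) = ∫ p in QR, U p := by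
  have per1 : ∀ x y : ℝ, Function.Periodic (fun s => U (s, y)) 1 := by
    intro x y s; simpa using h1 (s, y)
  have per2 : ∀ x : ℝ, Function.Periodic (fun s => U (x, s)) 1 := by
    intro x s; simpa using h2 (x, s)
  have i1 : IntegrableOn (fun p => U (p + w)) QR (volume.prod volume) := by
    exact (hU.comp (continuous_add_right w)).continuousOn.integrableOn_compact isCompact_QR
  have i2 : IntegrableOn U QR (volume.prod volume) := hU.continuousOn.integrableOn_compact isCompact_QR
  rw [QR, Measure.volume_eq_prod] at *
  rw [MeasureTheory.setIntegral_prod _ i1, MeasureTheory.setIntegral_prod _ i2]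
  have inner : ∀ x : ℝ, ∫ y in Icc (0:ℝ) 1, U ((x, y) + w) = ∫ y in Icc (0:ℝ) 1, U (x + w.1, y) := by
    intro x
    have : ∀ y : ℝ, U ((x, y) + w) = U (x + w.1, y + w.2) := by intro y; rfl
    simp_rw [this]
    exact shift1d (fun s => U (x + w.1, s)) (per2 (x + w.1)) w.2
  simp_rw [inner]
  exact shift1d (fun s => ∫ y in Icc (0:ℝ) 1, U (s, y)) (by
    intro s
    have : ∀ y : ℝ, U (s + 1, y) = U (s, y) := fun y => by simpa using h1 (s, y)
    simp only [this]) w.1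

lemma e2_symm_e10 : e2.symm ((1:ℝ), (0:ℝ)) = EuclideanSpace.single 0 (1:ℝ) := by
  ext i
  fin_cases i <;> simp [e2_symm_apply, EuclideanSpace.single_apply]

lemma e2_symm_e01 : e2.symm ((0:ℝ), (1:ℝ)) = EuclideanSpace.single 1 (1:ℝ) := by
  ext i
  fin_cases i <;> simp [e2_symm_apply, EuclideanSpace.single_apply]

/-- Fundamental: integrals of continuous periodic functions over `Q` are translation
invariant. -/
lemma shiftQ (g : E2 → ℝ) (hg : Continuous g) (hper : TPeriodic g) (v : E2) :
    ∫ x in Q, g (x + v) = ∫ x in Q, g x := by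
  rw [integral_Q_transfer (fun x => g (x + v)), integral_Q_transfer g]
  have key : ∀ p : ℝ × ℝ, g (e2.symm p + v) = g (e2.symm (p + e2 v)) := by
    intro p
    rw [e2_symm_add]
    simp
  simp_rw [key]
  exact shift2d (fun p => g (e2.symm p)) (hg.comp continuous_e2_symm)
    (fun p => by
      show g (e2.symm (p + (1,0))) = g (e2.symm p)
      rw [e2_symm_add, e2_symm_e10]; exact (hper (e2.symm p)).1)
    (fun p => by
      show g (e2.symm (p + (0,1))) = g (e2.symm p)
      rw [e2_symm_add, e2_symm_e01]; exact (hper (e2.symm p)).2)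
    (e2 v)

lemma isCompact_Q : IsCompact Q := by
  have : Q = e2.symm '' QR := by
    rw [Q_preimage]
    ext x
    simp only [mem_preimage, mem_image]
    exact ⟨fun h => ⟨e2 x, h, e2.symm_apply_apply x⟩,
      fun ⟨p, hp, he⟩ => by rw [← he]; simpa using hp⟩
  rw [this]
  exact isCompact_QR.image continuous_e2_symm

section measureLemmas

variable {α : Type*} [MeasurableSpace α] (ν : Measure α)

/-- Cauchy-Schwarz with the constant function 1. -/
lemma sq_integral_le (hν : ν univ ≠ ⊤) (u : α → ℝ) (hu : Integrable u ν)
    (hu2 : Integrable (fun x => u x ^ 2) ν) :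
    (∫ x, u x ∂ν) ^ 2 ≤ (ν univ).toReal * ∫ x, u x ^ 2 ∂ν := by
  haveI : IsFiniteMeasure ν := ⟨lt_top_iff_ne_top.2 hν⟩
  set V := (ν univ).toReal with hV
  have hV0 : 0 ≤ V := ENNReal.toReal_nonneg
  rcases eq_or_lt_of_le hV0 with h0 | hpos
  · have : ν univ = 0 := by
      have := ENNReal.toReal_eq_zero_iff (ν univ) |>.1 (by rw [← hV, ← h0])
      tauto
    have hz : ν = 0 := Measure.measure_univ_eq_zero.mp this
    simp [hz]
  · set c := (∫ x, u x ∂ν) / V with hc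
    have expand : ∀ x, (u x - c) ^ 2 = u x ^ 2 - (2 * c) * u x + c ^ 2 := by intro x; ring
    have hint : Integrable (fun x => u x ^ 2 - (2 * c) * u x + c ^ 2) ν :=
      (hu2.sub (hu.const_mul (2 * c))).add (integrable_const _)
    have h0 : 0 ≤ ∫ x, (u x - c) ^ 2 ∂ν := integral_nonneg fun x => sq_nonneg _
    rw [show (fun x => (u x - c) ^ 2) = fun x => u x ^ 2 - 2 * c * u x + c ^ 2 from funext expand]
      at h0
    have ha : Integrable (fun x => u x ^ 2 - 2 * c * u x) ν := hu2.sub (hu.const_mul (2*c))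
    have hb : Integrable (fun x => 2 * c * u x) ν := hu.const_mul (2*c)
    rw [integral_add ha (integrable_const _), integral_sub hu2 hb,
      integral_const_mul, integral_const, smul_eq_mul] at h0
    have hVV : (ν univ).toReal = V := rfl
    rw [measureReal_def, hVV, hc] at h0
    set I := ∫ x, u x ∂ν with hI
    set S := ∫ x, u x ^ 2 ∂ν with hS
    have hV' : V ≠ 0 := ne_of_gt hpos
    have e1 : 2 * (I / V) * I = 2 * (I ^ 2 / V) := by field_simp
    have e2 : V * (I / V) ^ 2 = I ^ 2 / V := by field_simp
    have h1 : I ^ 2 / V ≤ S := by rw [e1, e2] at h0; linarith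
    have := (div_le_iff₀ hpos).1 h1
    linarith

/-- Cauchy-Schwarz. -/
lemma integral_mul_sq_le (p q : α → ℝ) (hp : AEStronglyMeasurable p ν)
    (hq : AEStronglyMeasurable q ν)
    (hp2 : Integrable (fun x => p x ^ 2) ν) (hq2 : Integrable (fun x => q x ^ 2) ν) :
    (∫ x, p x * q x ∂ν) ^ 2 ≤ (∫ x, p x ^ 2 ∂ν) * ∫ x, q x ^ 2 ∂ν := by
  have hpq : Integrable (fun x => p x * q x) ν := by
    refine Integrable.mono' ((hp2.add hq2).div_const 2) (hp.mul hq) ?_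
    filter_upwards with x
    rw [norm_mul, Real.norm_eq_abs, Real.norm_eq_abs]
    have := sq_abs (p x) ▸ sq_abs (q x) ▸ two_mul_le_add_sq (|p x|) (|q x|)
    simp only [Pi.add_apply]
    linarith [this]
  have key : ∀ t : ℝ, 0 ≤ (∫ x, q x ^ 2 ∂ν) * (t * t) + (2 * ∫ x, p x * q x ∂ν) * t
      + ∫ x, p x ^ 2 ∂ν := by
    intro t
    have h0 : 0 ≤ ∫ x, (p x + t * q x) ^ 2 ∂ν := integral_nonneg fun x => sq_nonneg _
    have expand : (fun x => (p x + t * q x) ^ 2)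
        = fun x => (p x ^ 2 + 2 * t * (p x * q x)) + t ^ 2 * q x ^ 2 := by
      funext x; ring
    have ha : Integrable (fun x => p x ^ 2 + 2 * t * (p x * q x)) ν := hp2.add (hpq.const_mul (2*t))
    have hb : Integrable (fun x => t ^ 2 * q x ^ 2) ν := hq2.const_mul (t^2)
    have hcc : Integrable (fun x => 2 * t * (p x * q x)) ν := hpq.const_mul (2*t)
    rw [expand, integral_add ha hb, integral_add hp2 hcc,
      integral_const_mul, integral_const_mul] at h0
    nlinarith [h0]
  have := discrim_le_zero key
  rw [discrim] at this
  nlinarith [this]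

end measureLemmas

section mainEstimates

variable {f : E2 → ℝ} (hf : ContDiff ℝ (⊤ : ℕ∞) f) (hper : TPeriodic f)

lemma fderiv_shift (hf : ContDiff ℝ (⊤ : ℕ∞) f) (c : E2) (hc : ∀ y, f (y + c) = f y) (x : E2) :
    fderiv ℝ f (x + c) = fderiv ℝ f x := by
  have hdf : Differentiable ℝ f := hf.differentiable (by simp)
  have h1 : HasFDerivAt (fun y => f (y + c)) (fderiv ℝ f (x + c)) x := by
    have comp := ((hdf (x + c)).hasFDerivAt.comp x ((hasFDerivAt_id x).add_const c))
    exact comp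
  rw [funext hc] at h1
  exact h1.fderiv.symm

lemma TPeriodic.gradsq (hf : ContDiff ℝ (⊤ : ℕ∞) f) (hper : TPeriodic f) :
    TPeriodic (fun x => ‖fderiv ℝ f x‖ ^ 2) := by
  intro x
  constructor
  · show ‖fderiv ℝ f (x + _)‖ ^ 2 = ‖fderiv ℝ f x‖ ^ 2
    rw [fderiv_shift hf _ (fun y => (hper y).1)]
  · show ‖fderiv ℝ f (x + _)‖ ^ 2 = ‖fderiv ℝ f x‖ ^ 2
    rw [fderiv_shift hf _ (fun y => (hper y).2)]

lemma TPeriodic.comp (hper : TPeriodic f) (φ : ℝ → ℝ) : TPeriodic (fun x => φ (f x)) := by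
  intro x
  exact ⟨by show φ (f (x + _)) = φ (f x); rw [(hper x).1],
    by show φ (f (x + _)) = φ (f x); rw [(hper x).2]⟩

-- FTC along a segment
lemma ftc_seg (hf : ContDiff ℝ (⊤ : ℕ∞) f) (x h : E2) :
    f (x + h) - f x = ∫ t in (0:ℝ)..1, (fderiv ℝ f (x + t • h)) h := by
  have hdf : Differentiable ℝ f := hf.differentiable (by simp)
  have line : ∀ t : ℝ, HasDerivAt (fun s : ℝ => x + s • h) h t := by
    intro t
    simpa using ((hasDerivAt_id t).smul_const h).const_add x
  have key : ∀ t : ℝ, HasDerivAt (fun s : ℝ => f (x + s • h))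
      ((fderiv ℝ f (x + t • h)) h) t := by
    intro t
    have comp := (hdf (x + t • h)).hasFDerivAt.comp_hasDerivAt t (line t)
    exact comp
  have hcont : Continuous fun t : ℝ => (fderiv ℝ f (x + t • h)) h := by
    refine Continuous.clm_apply ?_ continuous_const
    exact (hf.continuous_fderiv (by simp)).comp
      (continuous_const.add (continuous_id.smul continuous_const))
  have := intervalIntegral.integral_eq_sub_of_hasDerivAt
    (f := fun s : ℝ => f (x + s • h)) (fun t _ => key t)
    (hcont.intervalIntegrable 0 1)
  rw [this]
  simp

-- interval Jensen
lemma interval_jensen (w : ℝ → ℝ) (hw : Continuous w) :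
    (∫ t in (0:ℝ)..1, w t) ^ 2 ≤ ∫ t in Icc (0:ℝ) 1, w t ^ 2 := by
  rw [intervalIntegral.integral_of_le zero_le_one, ← MeasureTheory.integral_Icc_eq_integral_Ioc]
  have hν : (volume.restrict (Icc (0:ℝ) 1)) univ ≠ ⊤ := by
    rw [Measure.restrict_apply_univ, Real.volume_Icc]
    simp
  have h := sq_integral_le (volume.restrict (Icc (0:ℝ) 1)) hν w
    (hw.continuousOn.integrableOn_compact isCompact_Icc)
    ((hw.pow 2).continuousOn.integrableOn_compact isCompact_Icc)
  rw [Measure.restrict_apply_univ, Real.volume_Icc] at h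
  norm_num at h
  exact h

lemma diff_sq (hf : ContDiff ℝ (⊤ : ℕ∞) f) (hper : TPeriodic f) (h : E2) :
    ∫ x in Q, (f (x + h) - f x) ^ 2 ≤ ‖h‖ ^ 2 * ∫ x in Q, ‖fderiv ℝ f x‖ ^ 2 := by
  have hfc : Continuous f := hf.continuous
  have hgc : Continuous fun x => ‖fderiv ℝ f x‖ ^ 2 :=
    ((hf.continuous_fderiv (by simp)).norm.pow 2)
  set g : E2 → ℝ := fun x => ‖fderiv ℝ f x‖ ^ 2 with hg
  set G : ℝ := ∫ x in Q, g x with hG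
  -- pointwise bound
  have point : ∀ x : E2, (f (x + h) - f x) ^ 2 ≤ ‖h‖ ^ 2 * ∫ t in Icc (0:ℝ) 1, g (x + t • h) := by
    intro x
    rw [ftc_seg hf x h]
    have hwcont : Continuous fun t : ℝ => (fderiv ℝ f (x + t • h)) h :=
      Continuous.clm_apply ((hf.continuous_fderiv (by simp)).comp
        (continuous_const.add (continuous_id.smul continuous_const))) continuous_const
    refine le_trans (interval_jensen _ hwcont) ?_
    have hmono : ∀ t ∈ Icc (0:ℝ) 1, ((fderiv ℝ f (x + t • h)) h) ^ 2 ≤ ‖h‖ ^ 2 * g (x + t • h) := by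
      intro t _
      have h1 : |(fderiv ℝ f (x + t • h)) h| ≤ ‖fderiv ℝ f (x + t • h)‖ * ‖h‖ :=
        (fderiv ℝ f (x + t • h)).le_opNorm h
      have h2 := pow_le_pow_left₀ (abs_nonneg _) h1 2
      rw [sq_abs] at h2
      calc ((fderiv ℝ f (x + t • h)) h) ^ 2 ≤ (‖fderiv ℝ f (x + t • h)‖ * ‖h‖) ^ 2 := h2
        _ = ‖h‖ ^ 2 * g (x + t • h) := by rw [hg]; ring
    calc ∫ t in Icc (0:ℝ) 1, ((fderiv ℝ f (x + t • h)) h) ^ 2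
        ≤ ∫ t in Icc (0:ℝ) 1, ‖h‖ ^ 2 * g (x + t • h) := by
          refine setIntegral_mono_on ((hwcont.pow 2).continuousOn.integrableOn_compact
            isCompact_Icc) ?_ measurableSet_Icc hmono
          exact ((continuous_const.mul (hgc.comp
            (continuous_const.add (continuous_id.smul continuous_const)))).continuousOn.integrableOn_compact
            isCompact_Icc)
      _ = ‖h‖ ^ 2 * ∫ t in Icc (0:ℝ) 1, g (x + t • h) := by
          rw [MeasureTheory.integral_const_mul]
  -- product integrability
  have hFc : Continuous fun p : E2 × ℝ => g (p.1 + p.2 • h) :=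
    hgc.comp (continuous_fst.add (continuous_snd.smul continuous_const))
  have hprod : Integrable (Function.uncurry fun x t => g (x + t • h))
      ((volume.restrict Q).prod (volume.restrict (Icc (0:ℝ) 1))) := by
    rw [Measure.prod_restrict]
    exact hFc.continuousOn.integrableOn_compact (isCompact_Q.prod isCompact_Icc)
  have hW : Integrable (fun x => ∫ t in Icc (0:ℝ) 1, g (x + t • h)) (volume.restrict Q) :=
    hprod.integral_prod_left
  -- integrate the pointwise bound
  have step1 : ∫ x in Q, (f (x + h) - f x) ^ 2
      ≤ ∫ x in Q, ‖h‖ ^ 2 * ∫ t in Icc (0:ℝ) 1, g (x + t • h) := by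
    refine setIntegral_mono_on ?_ (hW.const_mul _) measurableSet_Q (fun x _ => point x)
    exact (((hfc.comp (continuous_add_right h)).sub hfc).pow 2).continuousOn.integrableOn_compact
      isCompact_Q
  refine step1.trans ?_
  rw [MeasureTheory.integral_const_mul]
  have swap : ∫ x in Q, ∫ t in Icc (0:ℝ) 1, g (x + t • h)
      = ∫ t in Icc (0:ℝ) 1, ∫ x in Q, g (x + t • h) := integral_integral_swap hprod
  rw [swap]
  have inner : ∀ t : ℝ, ∫ x in Q, g (x + t • h) = G :=
    fun t => shiftQ g hgc (TPeriodic.gradsq hf hper) (t • h)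
  simp_rw [inner]
  have : ∫ _ in Icc (0:ℝ) 1, G = G := by
    rw [setIntegral_const, measureReal_def, Real.volume_Icc]
    norm_num
  rw [this]

end mainEstimates

section translation

lemma integral_comp_add_left_set (g : E2 → ℝ) (x : E2) (s : Set E2) :
    ∫ h in (fun h => x + h) ⁻¹' s, g (x + h) = ∫ y in s, g y :=
  (measurePreserving_add_left volume x).setIntegral_preimage_emb
    (MeasurableEquiv.addLeft x).measurableEmbedding g s

lemma preimage_add_ball' (x : E2) (r : ℝ) :
    (fun h => x + h) ⁻¹' (ball x r) = ball (0:E2) r := by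
  ext h
  simp [mem_ball, dist_eq_norm]

lemma integral_ball_translate (g : E2 → ℝ) (x : E2) (r : ℝ) :
    ∫ h in ball (0:E2) r, g (x + h) = ∫ y in ball x r, g y := by
  rw [← preimage_add_ball' x r]
  exact integral_comp_add_left_set g x (ball x r)

def halfv : E2 := e2.symm ((1:ℝ)/2, (1:ℝ)/2)

lemma halfv_apply (i : Fin 2) : halfv i = 1/2 := by
  fin_cases i <;> simp [halfv, e2_symm_apply]

lemma coord_le_norm (v : E2) (i : Fin 2) : |v i| ≤ ‖v‖ := by
  rw [EuclideanSpace.norm_eq]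
  have h1 : |v i| = Real.sqrt (‖v i‖ ^ 2) := by
    rw [Real.sqrt_sq_eq_abs, Real.norm_eq_abs, abs_abs]
  rw [h1]
  apply Real.sqrt_le_sqrt
  exact Finset.single_le_sum (f := fun j => ‖v j‖ ^ 2) (fun j _ => sq_nonneg _)
    (Finset.mem_univ i)

lemma ball_subset_shifted_cube (x : E2) (r : ℝ) (hr : r ≤ 1/2) :
    ball x r ⊆ (fun h => -(x - halfv) + h) ⁻¹' Q := by
  intro y hy
  have hdist : ‖y - x‖ < r := by
    rw [mem_ball, dist_eq_norm] at hy; exact hy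
  have hcoord : ∀ i : Fin 2, |y i - x i| ≤ 1/2 := by
    intro i
    have := coord_le_norm (y - x) i
    have hsub : (y - x) i = y i - x i := rfl
    rw [hsub] at this
    linarith
  have key : ∀ i : Fin 2, (-(x - halfv) + y) i ∈ Icc (0:ℝ) 1 := by
    intro i
    have := hcoord i
    have h0 : (-(x - halfv) + y) i = y i - x i + 1/2 := by
      show -(x - halfv) i + y i = _
      show -(x i - halfv i) + y i = _
      rw [halfv_apply]; ring
    rw [mem_Icc, h0]
    cases' abs_le.1 this with h1 h2
    constructor <;> linarith
  exact ⟨key 0, key 1⟩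

lemma shifted_cube_eq_image (c : E2) :
    (fun h => -c + h) ⁻¹' Q = (fun h => c + h) '' Q := by
  ext h
  simp only [mem_preimage, mem_image]
  exact ⟨fun hh => ⟨-c + h, hh, by abel⟩, fun ⟨q, hq, he⟩ => by rw [← he]; simpa using hq⟩

lemma integral_ball_le_L1 {f : E2 → ℝ} (hfc : Continuous f) (hper : TPeriodic f)
    (x : E2) (r : ℝ) (hr : r ≤ 1/2) :
    ∫ y in ball x r, |f y| ≤ ∫ x in Q, |f x| := by
  set c := x - halfv with hc
  have himg := shifted_cube_eq_image c
  have hcpt : IsCompact ((fun h => -c + h) ⁻¹' Q) := by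
    rw [himg]; exact isCompact_Q.image (continuous_const.add continuous_id)
  have hint : IntegrableOn (fun y => |f y|) ((fun h => -c + h) ⁻¹' Q) :=
    hfc.abs.continuousOn.integrableOn_compact hcpt
  have hmono : ∫ y in ball x r, |f y| ≤ ∫ y in (fun h => -c + h) ⁻¹' Q, |f y| := by
    refine setIntegral_mono_set hint ?_ (HasSubset.Subset.eventuallyLE
      (ball_subset_shifted_cube x r hr)) 
    filter_upwards with y using abs_nonneg _
  refine hmono.trans ?_
  have hpre : (fun h => c + h) ⁻¹' ((fun h => -c + h) ⁻¹' Q) = Q := by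
    ext h; simp
  have := integral_comp_add_left_set (fun y => |f y|) c ((fun h => -c + h) ⁻¹' Q)
  rw [hpre] at this
  rw [← this]
  have : ∀ h : E2, |f (c + h)| = |f (h + c)| := fun h => by rw [add_comm]
  simp_rw [this]
  exact le_of_eq (shiftQ (fun y => |f y|) hfc.abs (hper.comp abs) c)

end translation

section mballsec

lemma le_Mball {f : E2 → ℝ} (hfc : Continuous f) (hper : TPeriodic f)
    (r : ℝ) (hr : r ≤ 1/2) (x : E2) :
    ∫ y in ball x r, |f y| ≤ Mball f r := by
  refine le_ciSup (f := fun x => ∫ y in ball x r, |f y|) ?_ x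
  refine ⟨∫ x in Q, |f x|, ?_⟩
  rintro _ ⟨z, rfl⟩
  exact integral_ball_le_L1 hfc hper z r hr

lemma volume_ball_ge (r : ℝ) (hr : 0 < r) :
    ENNReal.ofReal (r ^ 2) ≤ volume (ball (0:E2) r) := by
  set box : Set (ℝ × ℝ) := Ioo (-(r/2)) (r/2) ×ˢ Ioo (-(r/2)) (r/2) with hbox
  have hsub : e2 ⁻¹' box ⊆ ball (0:E2) r := by
    intro x hx
    simp only [hbox, mem_preimage, e2_apply, mem_prod, mem_Ioo] at hx
    rw [mem_ball, dist_eq_norm, sub_zero, EuclideanSpace.norm_eq]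
    have hi : ∀ i : Fin 2, ‖x i‖ ^ 2 < r ^ 2 / 2 := by
      intro i
      rw [Real.norm_eq_abs]
      have hai : |x i| < r / 2 := by
        rw [abs_lt]
        fin_cases i
        · exact ⟨hx.1.1, hx.1.2⟩
        · exact ⟨hx.2.1, hx.2.2⟩
      nlinarith [abs_nonneg (x i)]
    rw [Real.sqrt_lt' hr, Fin.sum_univ_two]
    linarith [hi 0, hi 1]
  calc ENNReal.ofReal (r ^ 2) = volume box := by
        rw [hbox, Measure.volume_eq_prod, Measure.prod_prod, Real.volume_Ioo]
        rw [show r/2 - -(r/2) = r by ring, ← ENNReal.ofReal_mul hr.le]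
        rw [sq]
    _ = volume (e2 ⁻¹' box) := by
        rw [e2_mp.measure_preimage]
        exact ((measurableSet_Ioo.prod measurableSet_Ioo)).nullMeasurableSet
    _ ≤ volume (ball (0:E2) r) := measure_mono hsub

end mballsec

section core
open Pointwise

variable {f : E2 → ℝ}

lemma core_est (hf : ContDiff ℝ (⊤ : ℕ∞) f) (hper : TPeriodic f)
    (S K : Set E2) (hS : MeasurableSet S) (hK : IsCompact K) (hSK : S ⊆ K)
    (hvol : 0 < volume S) (hfin : volume S ≠ ⊤)
    (ρ : ℝ) (hρ : ∀ h ∈ S, ‖h‖ ≤ ρ) :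
    ∫ x in Q, (f x) ^ 2 ≤ Real.sqrt (∫ x in Q, (f x) ^ 2) *
      (ρ * Real.sqrt (∫ x in Q, ‖fderiv ℝ f x‖ ^ 2)) +
      ∫ x in Q, f x * ((∫ h in S, f (x + h)) / (volume S).toReal) := by
  have hfc : Continuous f := hf.continuous
  have hgc : Continuous fun x => ‖fderiv ℝ f x‖ ^ 2 := (hf.continuous_fderiv (by simp)).norm.pow 2
  set G : ℝ := ∫ x in Q, ‖fderiv ℝ f x‖ ^ 2 with hGdef
  have hG0 : 0 ≤ G := setIntegral_nonneg measurableSet_Q fun x _ => sq_nonneg _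
  set V : ℝ := (volume S).toReal with hVdef
  have hV : 0 < V := ENNReal.toReal_pos hvol.ne' hfin
  have hρ0 : 0 ≤ ρ := by
    have hne : S.Nonempty := by
      by_contra hemp
      rw [Set.not_nonempty_iff_eq_empty] at hemp
      rw [hemp] at hvol; simp at hvol
    obtain ⟨h0, hh0⟩ := hne
    exact (norm_nonneg h0).trans (hρ h0 hh0)
  set FS : E2 → ℝ := fun x => (∫ h in S, f (x + h)) / V with hFSdef
  set X : ℝ := ∫ x in Q, (f x) ^ 2 with hXdef
  have hX0 : 0 ≤ X := setIntegral_nonneg measurableSet_Q fun x _ => sq_nonneg _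
  -- basic integrability of h ↦ f (x + h) on S
  have ifS : ∀ x : E2, IntegrableOn (fun h => f (x + h)) S := fun x =>
    ((hfc.comp (continuous_add_left x)).continuousOn.integrableOn_compact hK).mono_set hSK
  -- uniform bound for FS on Q
  have hQK : IsCompact (Q + K) := isCompact_Q.add hK
  obtain ⟨B₀, hB₀⟩ := hQK.exists_bound_of_continuousOn hfc.continuousOn
  set B : ℝ := max B₀ 0 with hBdef
  have hB0 : 0 ≤ B := le_max_right _ _
  have hfB : ∀ x ∈ Q, ∀ h ∈ S, |f (x + h)| ≤ B := by
    intro x hx h hh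
    have : x + h ∈ Q + K := add_mem_add hx (hSK hh)
    exact (hB₀ _ this).trans (le_max_left _ _)
  have hFSb : ∀ x ∈ Q, |FS x| ≤ B := by
    intro x hx
    have h1 : |∫ h in S, f (x + h)| ≤ ∫ h in S, |f (x + h)| := by
      simpa [Real.norm_eq_abs] using norm_integral_le_integral_norm (μ := volume.restrict S)
        (fun h => f (x + h))
    have h2 : ∫ h in S, |f (x + h)| ≤ ∫ (_ : E2) in S, B := by
      refine setIntegral_mono_on ((ifS x).abs) ?_ hS fun h hh => hfB x hx h hh
      exact integrableOn_const hfin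
    have h3 : ∫ (_ : E2) in S, B = V * B := by rw [setIntegral_const, smul_eq_mul, measureReal_def]
    have habs : |FS x| = |∫ h in S, f (x + h)| / V := by
      show |(∫ h in S, f (x + h)) / V| = _
      rw [abs_div, abs_of_pos hV]
    rw [habs, div_le_iff₀ hV]
    calc |∫ h in S, f (x + h)| ≤ V * B := h1.trans (h2.trans_eq h3)
      _ = B * V := mul_comm _ _
  -- measurability of FS
  have hFSm : AEStronglyMeasurable FS (volume.restrict Q) := by
    have hsm : StronglyMeasurable fun x : E2 => ∫ h in S, f (x + h) :=
      StronglyMeasurable.integral_prod_right'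
        (f := fun p : E2 × E2 => f (p.1 + p.2)) (hfc.comp continuous_add).stronglyMeasurable
    have : FS = fun x => (∫ h in S, f (x + h)) * V⁻¹ := by
      funext x; show (∫ h in S, f (x + h)) / V = _; rw [div_eq_mul_inv]
    rw [this]
    exact (hsm.mul_const V⁻¹).aestronglyMeasurable
  -- product integrability
  have iprod : Integrable (Function.uncurry fun x h => (f x - f (x + h)) ^ 2)
      ((volume.restrict Q).prod (volume.restrict S)) := by
    rw [Measure.prod_restrict]
    refine IntegrableOn.mono_set ?_ (Set.prod_mono_right hSK)
    exact (((hfc.comp continuous_fst).sub (hfc.comp continuous_add)).pow 2).continuousOn.integrableOn_compact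
      (isCompact_Q.prod hK)
  -- pointwise Jensen
  have point : ∀ x : E2, (f x - FS x) ^ 2 ≤ (∫ h in S, (f x - f (x + h)) ^ 2) / V := by
    intro x
    set u : E2 → ℝ := fun h => f x - f (x + h) with hu
    have hconst : IntegrableOn (fun _ : E2 => f x) S :=
      integrableOn_const hfin
    have huint : IntegrableOn u S := hconst.sub (ifS x)
    have hu2 : IntegrableOn (fun h => u h ^ 2) S :=
      (((continuous_const.sub (hfc.comp (continuous_add_left x))).pow
        2).continuousOn.integrableOn_compact hK).mono_set hSK
    have hsum : ∫ h in S, u h = V * f x - ∫ h in S, f (x + h) := by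
      simp only [hu]
      rw [integral_sub hconst (ifS x), setIntegral_const, smul_eq_mul, measureReal_def]
    have heq : f x - FS x = (∫ h in S, u h) / V := by
      rw [hsum]
      show f x - (∫ h in S, f (x + h)) / V = _
      field_simp
    have hJ := sq_integral_le (volume.restrict S)
      (by rw [Measure.restrict_apply_univ]; exact hfin) u huint hu2
    rw [Measure.restrict_apply_univ] at hJ
    rw [heq, div_pow]
    calc (∫ h in S, u h) ^ 2 / V ^ 2 ≤ (V * ∫ h in S, u h ^ 2) / V ^ 2 := by
          gcongr
      _ = (∫ h in S, u h ^ 2) / V := by field_simp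
  -- integrate the Jensen bound and swap
  have imargQ : IntegrableOn (fun x => ∫ h in S, (f x - f (x + h)) ^ 2) Q :=
    iprod.integral_prod_left
  have iLHS : IntegrableOn (fun x => (f x - FS x) ^ 2) Q := by
    refine Integrable.mono' (g := fun x => (|f x| + B) ^ 2)
      (((hfc.abs.add continuous_const).pow 2).continuousOn.integrableOn_compact isCompact_Q)
      (((hfc.aestronglyMeasurable.restrict).sub hFSm).pow 2) ?_
    filter_upwards [ae_restrict_mem measurableSet_Q] with x hx
    rw [Real.norm_eq_abs, abs_of_nonneg (sq_nonneg _)]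
    have h1 : |f x - FS x| ≤ |f x| + B := by
      refine (abs_sub _ _).trans ?_
      exact add_le_add le_rfl (hFSb x hx)
    calc (f x - FS x) ^ 2 = |f x - FS x| ^ 2 := (sq_abs _).symm
      _ ≤ (|f x| + B) ^ 2 := pow_le_pow_left₀ (abs_nonneg _) h1 2
  have step1 : ∫ x in Q, (f x - FS x) ^ 2 ≤ (∫ x in Q, ∫ h in S, (f x - f (x + h)) ^ 2) / V := by
    rw [← MeasureTheory.integral_div]
    exact setIntegral_mono_on iLHS (imargQ.div_const V) measurableSet_Q fun x _ => point x
  have swap : ∫ x in Q, ∫ h in S, (f x - f (x + h)) ^ 2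
      = ∫ h in S, ∫ x in Q, (f x - f (x + h)) ^ 2 := integral_integral_swap iprod
  have inner : ∀ h ∈ S, ∫ x in Q, (f x - f (x + h)) ^ 2 ≤ ρ ^ 2 * G := by
    intro h hh
    have hflip : ∀ x : E2, (f x - f (x + h)) ^ 2 = (f (x + h) - f x) ^ 2 := fun x => by ring
    simp_rw [hflip]
    refine (diff_sq hf hper h).trans ?_
    have : ‖h‖ ^ 2 ≤ ρ ^ 2 := pow_le_pow_left₀ (norm_nonneg _) (hρ h hh) 2
    exact mul_le_mul_of_nonneg_right this hG0
  have imargS : IntegrableOn (fun h => ∫ x in Q, (f x - f (x + h)) ^ 2) S :=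
    iprod.integral_prod_right
  have step2 : ∫ h in S, ∫ x in Q, (f x - f (x + h)) ^ 2 ≤ V * (ρ ^ 2 * G) := by
    have : ∫ (_ : E2) in S, ρ ^ 2 * G = V * (ρ ^ 2 * G) := by
      rw [setIntegral_const, smul_eq_mul, measureReal_def]
    rw [← this]
    refine setIntegral_mono_on imargS ?_ hS inner
    exact integrableOn_const hfin
  have diffbound : ∫ x in Q, (f x - FS x) ^ 2 ≤ ρ ^ 2 * G := by
    refine step1.trans ?_
    rw [swap]
    calc (∫ h in S, ∫ x in Q, (f x - f (x + h)) ^ 2) / V ≤ (V * (ρ ^ 2 * G)) / V := by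
          gcongr
      _ = ρ ^ 2 * G := by field_simp
  -- splitting
  have ifFS : IntegrableOn (fun x => f x * FS x) Q := by
    refine Integrable.mono' (g := fun x => B * |f x|)
      ((hfc.abs.continuousOn.integrableOn_compact isCompact_Q).const_mul B)
      (hfc.aestronglyMeasurable.restrict.mul hFSm) ?_
    filter_upwards [ae_restrict_mem measurableSet_Q] with x hx
    rw [Real.norm_eq_abs, abs_mul, mul_comm]
    exact mul_le_mul_of_nonneg_right (hFSb x hx) (abs_nonneg _)
  have if2 : IntegrableOn (fun x => (f x) ^ 2) Q :=
    (hfc.pow 2).continuousOn.integrableOn_compact isCompact_Q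
  have split : ∫ x in Q, f x * (f x - FS x) = X - ∫ x in Q, f x * FS x := by
    have : (fun x => f x * (f x - FS x)) = fun x => (f x) ^ 2 - f x * FS x := by
      funext x; ring
    rw [this, integral_sub if2 ifFS, hXdef]
  -- Cauchy-Schwarz
  have iDiff2 : IntegrableOn (fun x => (f x - FS x) ^ 2) Q := iLHS
  have hCS := integral_mul_sq_le (volume.restrict Q) f (fun x => f x - FS x)
    hfc.aestronglyMeasurable.restrict (hfc.aestronglyMeasurable.restrict.sub hFSm) if2 iDiff2
  have hCS' : ∫ x in Q, f x * (f x - FS x) ≤ Real.sqrt X * (ρ * Real.sqrt G) := by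
    set D := ∫ x in Q, (f x - FS x) ^ 2 with hD
    have hD0 : 0 ≤ D := setIntegral_nonneg measurableSet_Q fun x _ => sq_nonneg _
    calc ∫ x in Q, f x * (f x - FS x) ≤ |∫ x in Q, f x * (f x - FS x)| := le_abs_self _
      _ = Real.sqrt ((∫ x in Q, f x * (f x - FS x)) ^ 2) := (Real.sqrt_sq_eq_abs _).symm
      _ ≤ Real.sqrt (X * D) := Real.sqrt_le_sqrt hCS
      _ ≤ Real.sqrt (X * (ρ ^ 2 * G)) :=
          Real.sqrt_le_sqrt (mul_le_mul_of_nonneg_left diffbound hX0)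
      _ = Real.sqrt X * (ρ * Real.sqrt G) := by
          rw [Real.sqrt_mul hX0, Real.sqrt_mul (sq_nonneg ρ), Real.sqrt_sq hρ0]
  have final : X = (∫ x in Q, f x * (f x - FS x)) + ∫ x in Q, f x * FS x := by
    rw [split]; ring
  have hfin2 := add_le_add_right hCS' (∫ x in Q, f x * FS x)
  show X ≤ Real.sqrt X * (ρ * Real.sqrt G) + ∫ x in Q, f x * FS x
  linarith [final, hfin2]

end core

section cors

variable {f : E2 → ℝ}

lemma norm_le_sqrt_two_of_mem_Q (h : E2) (hh : h ∈ Q) : ‖h‖ ≤ Real.sqrt 2 := by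
  obtain ⟨h0, h1⟩ := hh
  rw [EuclideanSpace.norm_eq, Fin.sum_univ_two]
  apply Real.sqrt_le_sqrt
  have e0 : ‖h 0‖ ^ 2 ≤ 1 := by
    rw [Real.norm_eq_abs, sq_abs]
    nlinarith [h0.1, h0.2]
  have e1 : ‖h 1‖ ^ 2 ≤ 1 := by
    rw [Real.norm_eq_abs, sq_abs]
    nlinarith [h1.1, h1.2]
  linarith

lemma poincare (hf : ContDiff ℝ (⊤ : ℕ∞) f) (hper : TPeriodic f) (hzero : (∫ x in Q, f x) = 0) :
    ∫ x in Q, (f x) ^ 2 ≤ 2 * ∫ x in Q, ‖fderiv ℝ f x‖ ^ 2 := by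
  have hfc : Continuous f := hf.continuous
  set X := ∫ x in Q, (f x) ^ 2 with hX
  set G := ∫ x in Q, ‖fderiv ℝ f x‖ ^ 2 with hG
  have hX0 : 0 ≤ X := setIntegral_nonneg measurableSet_Q fun x _ => sq_nonneg _
  have hG0 : 0 ≤ G := setIntegral_nonneg measurableSet_Q fun x _ => sq_nonneg _
  have hcore := core_est hf hper Q Q measurableSet_Q isCompact_Q (subset_refl _)
    (by rw [volume_Q]; norm_num) (by rw [volume_Q]; norm_num)
    (Real.sqrt 2) norm_le_sqrt_two_of_mem_Q
  have hFS0 : ∀ x : E2, (∫ h in Q, f (x + h)) = 0 := by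
    intro x
    have hcomm : ∀ h : E2, f (x + h) = f (h + x) := fun h => by rw [add_comm]
    simp_rw [hcomm]
    rw [shiftQ f hfc hper x]
    exact hzero
  have hzero2 : (∫ x in Q, f x * ((∫ h in Q, f (x + h)) / (volume Q).toReal)) = 0 := by
    have : ∀ x : E2, f x * ((∫ h in Q, f (x + h)) / (volume Q).toReal) = 0 := by
      intro x; rw [hFS0 x]; simp
    simp_rw [this]
    simp
  rw [hzero2, add_zero] at hcore
  have h2 : Real.sqrt 2 ^ 2 = 2 := Real.sq_sqrt (by norm_num)
  nlinarith [hcore, Real.sq_sqrt hX0, Real.sq_sqrt hG0, Real.sqrt_nonneg X, Real.sqrt_nonneg G,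
    Real.sqrt_nonneg 2, sq_nonneg (Real.sqrt X - Real.sqrt 2 * Real.sqrt G)]

lemma ball_est {M : ℝ} (hf : ContDiff ℝ (⊤ : ℕ∞) f) (hper : TPeriodic f)
    (hM1 : (∫ x in Q, |f x|) ≤ M) (ℓ : ℝ) (hℓ0 : 0 < ℓ) (hℓ : ℓ ≤ 1/2) :
    ∫ x in Q, (f x) ^ 2 ≤ Real.sqrt (∫ x in Q, (f x) ^ 2) *
      (ℓ * Real.sqrt (∫ x in Q, ‖fderiv ℝ f x‖ ^ 2)) + M * Mball f ℓ / ℓ ^ 2 := by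
  have hfc : Continuous f := hf.continuous
  set S := ball (0:E2) ℓ with hSdef
  set K := closedBall (0:E2) ℓ with hKdef
  have hvol : 0 < volume S := measure_ball_pos volume 0 hℓ0
  have hfin : volume S ≠ ⊤ := measure_ball_lt_top.ne
  set V : ℝ := (volume S).toReal with hVdef
  have hV : 0 < V := ENNReal.toReal_pos hvol.ne' hfin
  have hVℓ : ℓ ^ 2 ≤ V := by
    have h1 := volume_ball_ge ℓ hℓ0
    have := ENNReal.toReal_le_toReal ENNReal.ofReal_ne_top hfin |>.2 h1
    rwa [ENNReal.toReal_ofReal (sq_nonneg ℓ)] at this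
  have hcore := core_est hf hper S K measurableSet_ball (isCompact_closedBall (0:E2) ℓ)
    ball_subset_closedBall hvol hfin ℓ
    (fun h hh => by
      rw [hSdef, mem_ball, dist_eq_norm, sub_zero] at hh
      exact hh.le)
  refine hcore.trans (add_le_add_right ?_ _)
  -- bound the average term
  set MB := Mball f ℓ with hMB
  have hMB0 : 0 ≤ MB :=
    le_trans (setIntegral_nonneg (s := ball (0:E2) ℓ) measurableSet_ball
      fun y _ => abs_nonneg (f y)) (le_Mball hfc hper ℓ hℓ (0:E2))
  have hM0 : 0 ≤ M := le_trans (setIntegral_nonneg measurableSet_Q fun x _ => abs_nonneg _) hM1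
  have hFSB : ∀ x : E2, |(∫ h in S, f (x + h)) / V| ≤ MB / V := by
    intro x
    rw [abs_div, abs_of_pos hV]
    gcongr
    calc |∫ h in S, f (x + h)| ≤ ∫ h in S, |f (x + h)| := by
          simpa [Real.norm_eq_abs] using norm_integral_le_integral_norm
            (μ := volume.restrict S) (fun h => f (x + h))
      _ = ∫ y in ball x ℓ, |f y| := integral_ball_translate (fun y => |f y|) x ℓ
      _ ≤ MB := le_Mball hfc hper ℓ hℓ x
  have hsm : StronglyMeasurable fun x : E2 => ∫ h in S, f (x + h) :=
    StronglyMeasurable.integral_prod_right'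
      (f := fun p : E2 × E2 => f (p.1 + p.2)) (hfc.comp continuous_add).stronglyMeasurable
  have hFSm : AEStronglyMeasurable (fun x => (∫ h in S, f (x + h)) / V)
      (volume.restrict Q) := by
    have heq : (fun x => (∫ h in S, f (x + h)) / V)
        = fun x => (∫ h in S, f (x + h)) * V⁻¹ := by
      funext x; rw [div_eq_mul_inv]
    rw [heq]
    exact (hsm.mul_const V⁻¹).aestronglyMeasurable
  have ifFS : IntegrableOn (fun x => f x * ((∫ h in S, f (x + h)) / V)) Q := by
    refine Integrable.mono' (g := fun x => (MB / V) * |f x|)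
      ((hfc.abs.continuousOn.integrableOn_compact isCompact_Q).const_mul _)
      (hfc.aestronglyMeasurable.restrict.mul hFSm) ?_
    filter_upwards with x
    calc ‖f x * ((∫ h in S, f (x + h)) / V)‖
        = |f x| * |(∫ h in S, f (x + h)) / V| := by rw [Real.norm_eq_abs, abs_mul]
      _ ≤ |f x| * (MB / V) := mul_le_mul_of_nonneg_left (hFSB x) (abs_nonneg _)
      _ = MB / V * |f x| := mul_comm _ _
  have hT : ∫ x in Q, f x * ((∫ h in S, f (x + h)) / V) ≤ (MB / V) * ∫ x in Q, |f x| := by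
    rw [← MeasureTheory.integral_const_mul]
    refine setIntegral_mono_on ifFS
      ((hfc.abs.continuousOn.integrableOn_compact isCompact_Q).const_mul _)
      measurableSet_Q ?_
    intro x _
    calc f x * ((∫ h in S, f (x + h)) / V)
        ≤ |f x * ((∫ h in S, f (x + h)) / V)| := le_abs_self _
      _ = |f x| * |(∫ h in S, f (x + h)) / V| := abs_mul _ _
      _ ≤ |f x| * (MB / V) := mul_le_mul_of_nonneg_left (hFSB x) (abs_nonneg _)
      _ = MB / V * |f x| := mul_comm _ _
  calc ∫ x in Q, f x * ((∫ h in S, f (x + h)) / V)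
      ≤ (MB / V) * ∫ x in Q, |f x| := hT
    _ ≤ (MB / V) * M := mul_le_mul_of_nonneg_left hM1 (div_nonneg hMB0 hV.le)
    _ = M * MB / V := by ring
    _ ≤ M * MB / ℓ ^ 2 := by gcongr <;> positivity

end cors

lemma absorb {X a b : ℝ} (hX : 0 ≤ X) (h : X ≤ Real.sqrt X * a + b) : X ≤ a ^ 2 + 2 * b := by
  nlinarith [Real.sq_sqrt hX, Real.sqrt_nonneg X, sq_nonneg (Real.sqrt X - a)]

lemma case_small (g : ℝ) (hg0 : 0 ≤ g) (hg : g ≤ Real.exp 2) :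
    2 * g ^ 2 * (1 + |Real.log g|) ^ ((1:ℝ)/4) ≤ 48 * g := by
  set D := (1 + |Real.log g|) ^ ((1:ℝ)/4) with hD
  have hbase : (1:ℝ) ≤ 1 + |Real.log g| := by linarith [abs_nonneg (Real.log g)]
  have hD1 : 1 ≤ D := by
    rw [hD]
    calc (1:ℝ) = 1 ^ ((1:ℝ)/4) := (Real.one_rpow _).symm
      _ ≤ (1 + |Real.log g|) ^ ((1:ℝ)/4) := by
          apply Real.rpow_le_rpow zero_le_one hbase (by norm_num)
  have hDle : D ≤ 1 + |Real.log g| := by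
    rw [hD]
    calc (1 + |Real.log g|) ^ ((1:ℝ)/4) ≤ (1 + |Real.log g|) ^ (1:ℝ) :=
          Real.rpow_le_rpow_of_exponent_le hbase (by norm_num)
      _ = 1 + |Real.log g| := Real.rpow_one _
  rcases eq_or_lt_of_le hg0 with h0 | hpos
  · rw [← h0]; simp
  have key : 2 * g * (1 + |Real.log g|) ≤ 48 := by
    have hexp : Real.exp 2 ≤ 7.4 := by
      have h1 := Real.exp_one_lt_d9
      have h2 : Real.exp 2 = Real.exp 1 * Real.exp 1 := by
        rw [← Real.exp_add]; norm_num
      nlinarith [Real.exp_pos 1]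
    rcases le_or_gt g 1 with hg1 | hg1
    · have hlog : Real.log g ≤ 0 := Real.log_nonpos hg0 hg1
      have habs : |Real.log g| = -Real.log g := abs_of_nonpos hlog
      have hbound : -(g * Real.log g) ≤ 1 - g := by
        have h1 := Real.log_le_sub_one_of_pos (show (0:ℝ) < 1/g by positivity)
        rw [Real.log_div one_ne_zero (ne_of_gt hpos), Real.log_one] at h1
        have h2 : g * (0 - Real.log g) ≤ g * (1/g - 1) :=
          mul_le_mul_of_nonneg_left (by linarith) hg0
        have h3 : g * (1/g - 1) = 1 - g := by field_simp
        nlinarith [h2, h3]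
      rw [habs]
      nlinarith
    · have hlog0 : 0 ≤ Real.log g := Real.log_nonneg hg1.le
      have hlog2 : Real.log g ≤ 2 := by
        calc Real.log g ≤ Real.log (Real.exp 2) := Real.log_le_log hpos hg
          _ = 2 := Real.log_exp 2
      rw [abs_of_nonneg hlog0]
      nlinarith
  calc 2 * g ^ 2 * D ≤ 2 * g ^ 2 * (1 + |Real.log g|) := by
        apply mul_le_mul_of_nonneg_left hDle (by positivity)
    _ = g * (2 * g * (1 + |Real.log g|)) := by ring
    _ ≤ g * 48 := mul_le_mul_of_nonneg_left key hg0
    _ = 48 * g := mul_comm _ _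


set_option maxHeartbeats 2000000 in
/-- Logarithmically improved Nash inequality: if `‖f‖_{L¹} ≤ M` and
`M_f(r) ≤ A |log r|^{-1/2}` for all `r ∈ (0,1/2)`, then
`‖f‖_{L²}² ≤ C ‖∇f‖_{L²} / (1 + |log ‖∇f‖_{L²}|)^{1/4}` for a constant `C = C(M,A)`. -/
theorem improved_nash_logarithmic (M A : ℝ) (hM : 0 < M) (hA : 0 < A) :
    ∃ C : ℝ, 0 < C ∧ ∀ f : E2 → ℝ, ContDiff ℝ (⊤ : ℕ∞) f → TPeriodic f →
      (∫ x in Q, f x) = 0 → L1norm f ≤ M →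
      (∀ r ∈ Set.Ioo (0:ℝ) (1/2), Mball f r ≤ A / Real.sqrt |Real.log r|) →
      L2sq f ≤ C * Real.sqrt (GradL2sq f) /
        (1 + |Real.log (Real.sqrt (GradL2sq f))|) ^ ((1:ℝ)/4) := by
  refine ⟨48 + 4 * M * A, by positivity, ?_⟩
  intro f hf hper hzero hL1 hMb
  set C : ℝ := 48 + 4 * M * A with hC
  set G := GradL2sq f with hGdef
  have hGQ : G = ∫ x in Q, ‖fderiv ℝ f x‖ ^ 2 := rfl
  have hG0 : 0 ≤ G := setIntegral_nonneg measurableSet_Q fun x _ => sq_nonneg _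
  set g := Real.sqrt G with hgdef
  have hg0 : 0 ≤ g := Real.sqrt_nonneg _
  have hGg : G = g ^ 2 := (Real.sq_sqrt hG0).symm
  set X := L2sq f with hXdef
  have hXQ : X = ∫ x in Q, (f x) ^ 2 := rfl
  have hX0 : 0 ≤ X := setIntegral_nonneg measurableSet_Q fun x _ => sq_nonneg _
  set D := (1 + |Real.log g|) ^ ((1:ℝ)/4) with hD
  have hbase : (1:ℝ) ≤ 1 + |Real.log g| := by linarith only [abs_nonneg (Real.log g)]
  have hD1 : 1 ≤ D := by
    rw [hD]
    calc (1:ℝ) = 1 ^ ((1:ℝ)/4) := (Real.one_rpow _).symm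
      _ ≤ (1 + |Real.log g|) ^ ((1:ℝ)/4) := Real.rpow_le_rpow zero_le_one hbase (by norm_num)
  have hDpos : 0 < D := lt_of_lt_of_le one_pos hD1
  show X ≤ C * g / D
  by_cases hcase : g ≤ Real.exp 2
  -- small gradient: Poincaré
  · have hP : X ≤ 2 * G := poincare hf hper hzero
    have h1 : X ≤ 2 * g ^ 2 := by rw [hGg] at hP; exact hP
    have key := case_small g hg0 hcase
    have h2 : 2 * g ^ 2 ≤ 48 * g / D := by
      rw [le_div_iff₀ hDpos]
      exact key
    have h48 : 48 * g ≤ C * g := by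
      apply mul_le_mul_of_nonneg_right ?_ hg0
      rw [hC]; linarith only [mul_pos hM hA]
    have h3 : 48 * g / D ≤ C * g / D := by gcongr
    linarith
  -- large gradient: mollification estimate
  · push_neg at hcase
    have hgpos : 0 < g := lt_trans (Real.exp_pos 2) hcase
    have hlogg : 2 ≤ Real.log g := by
      have h1 : Real.log (Real.exp 2) ≤ Real.log g := Real.log_le_log (Real.exp_pos 2) hcase.le
      rwa [Real.log_exp] at h1
    have hlogpos : 0 < Real.log g := by linarith only [hlogg]
    have habs : |Real.log g| = Real.log g := abs_of_pos hlogpos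
    set L := 1 + Real.log g with hL
    have hL3 : 3 ≤ L := by rw [hL]; linarith only [hlogg]
    have hL0 : 0 ≤ L := by linarith only [hL3]
    have hDL : D = L ^ ((1:ℝ)/4) := by rw [hD, habs]
    have hgD : 0 < g * D := by positivity
    set ℓ := (Real.sqrt (g * D))⁻¹ with hℓ
    have hsqp : 0 < Real.sqrt (g * D) := Real.sqrt_pos.2 hgD
    have hℓpos : 0 < ℓ := by positivity
    have hℓ2 : ℓ ^ 2 = (g * D)⁻¹ := by
      rw [hℓ, inv_pow, Real.sq_sqrt hgD.le]
    have hexp4 : (4:ℝ) < Real.exp 2 := by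
      have h1 := Real.exp_one_gt_d9
      have h2 : Real.exp 2 = Real.exp 1 * Real.exp 1 := by rw [← Real.exp_add]; norm_num
      rw [h2]
      nlinarith only [h1]
    have h4gD : (4:ℝ) < g * D := by
      have h1 : g * 1 ≤ g * D := mul_le_mul_of_nonneg_left hD1 hg0
      rw [mul_one] at h1
      linarith only [h1, hexp4, hcase]
    have hsq2 : (2:ℝ) < Real.sqrt (g * D) := by
      have h5 : Real.sqrt 4 < Real.sqrt (g * D) := Real.sqrt_lt_sqrt (by norm_num) h4gD
      rwa [show Real.sqrt 4 = 2 by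
        rw [show (4:ℝ) = 2 ^ 2 by norm_num, Real.sqrt_sq (by norm_num : (0:ℝ) ≤ 2)]] at h5
    have hℓhalf : ℓ < 1/2 := by
      rw [hℓ, inv_lt_comm₀ hsqp (by norm_num : (0:ℝ) < 1/2)]
      rw [show ((1:ℝ)/2)⁻¹ = 2 by norm_num]
      exact hsq2
    have hmem : ℓ ∈ Set.Ioo (0:ℝ) (1/2) := Set.mem_Ioo.2 ⟨hℓpos, hℓhalf⟩
    have hMB := hMb ℓ hmem
    have hgD1 : 1 ≤ g * D := by linarith only [h4gD]
    have hlogℓ : |Real.log ℓ| = Real.log (g * D) / 2 := by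
      rw [hℓ, Real.log_inv, abs_neg, Real.log_sqrt hgD.le, abs_of_nonneg]
      have := Real.log_nonneg hgD1
      positivity
    have hlogℓ4 : L / 4 ≤ |Real.log ℓ| := by
      rw [hlogℓ]
      have hD0 : (0:ℝ) < D := hDpos
      have h1 : Real.log (g * D) = Real.log g + Real.log D :=
        Real.log_mul hgpos.ne' hD0.ne'
      have h2 : 0 ≤ Real.log D := Real.log_nonneg hD1
      have h3 : L / 2 ≤ Real.log g := by rw [hL]; linarith only [hlogg]
      linarith only [h1, h2, h3]
    have hsqrt4 : Real.sqrt (L / 4) = Real.sqrt L / 2 := by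
      rw [Real.sqrt_div hL0 4, show Real.sqrt 4 = 2 by
        rw [show (4:ℝ) = 2 ^ 2 by norm_num, Real.sqrt_sq (by norm_num : (0:ℝ) ≤ 2)]]
    have hsqrtlog : Real.sqrt L / 2 ≤ Real.sqrt |Real.log ℓ| := by
      rw [← hsqrt4]
      exact Real.sqrt_le_sqrt hlogℓ4
    have hsqL : 0 < Real.sqrt L := Real.sqrt_pos.2 (by linarith)
    have hMBle : Mball f ℓ ≤ 2 * A / Real.sqrt L := by
      refine hMB.trans ?_
      rw [show 2 * A / Real.sqrt L = A / (Real.sqrt L / 2) by field_simp]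
      gcongr
    -- apply the ball estimate
    have hL1' : (∫ x in Q, |f x|) ≤ M := hL1
    have hball := ball_est hf hper hL1' ℓ hℓpos hℓhalf.le
    rw [← hGQ, ← hXQ, ← hgdef] at hball
    have habsorb := absorb hX0 hball
    -- simplify the two terms
    have hD2 : D ^ 2 = Real.sqrt L := by
      rw [hDL, ← Real.rpow_natCast (L ^ ((1:ℝ)/4)) 2, ← Real.rpow_mul hL0,
        Real.sqrt_eq_rpow]
      norm_num
    have ha2 : (ℓ * g) ^ 2 = g / D := by
      rw [mul_pow, hℓ2]
      field_simp
    have hb : M * Mball f ℓ / ℓ ^ 2 ≤ 2 * M * A * g / D := by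
      have hinv : (ℓ ^ 2)⁻¹ = g * D := by rw [hℓ2, inv_inv]
      have hMB0 : 0 ≤ Mball f ℓ :=
        le_trans (setIntegral_nonneg (s := ball (0:E2) ℓ) measurableSet_ball
          fun y _ => abs_nonneg (f y)) (le_Mball hf.continuous hper ℓ hℓhalf.le (0:E2))
      calc M * Mball f ℓ / ℓ ^ 2 = M * Mball f ℓ * (g * D) := by
            rw [div_eq_mul_inv, hinv]
        _ ≤ M * (2 * A / Real.sqrt L) * (g * D) := by gcongr
        _ = 2 * M * A * g * (D / Real.sqrt L) := by ring
        _ = 2 * M * A * g / D := by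
            rw [← hD2]
            field_simp
    have hfinal : X ≤ g / D + 2 * (2 * M * A * g / D) := by
      have h1 : (ℓ * g) ^ 2 = g / D := ha2
      calc X ≤ (ℓ * g) ^ 2 + 2 * (M * Mball f ℓ / ℓ ^ 2) := habsorb
        _ ≤ g / D + 2 * (2 * M * A * g / D) := by
            rw [h1]
            gcongr
    have hgD0 : 0 ≤ g / D := div_nonneg hg0 hDpos.le
    calc X ≤ g / D + 2 * (2 * M * A * g / D) := hfinal
      _ = (1 + 4 * M * A) * (g / D) := by ring
      _ ≤ C * (g / D) := by
          apply mul_le_mul_of_nonneg_right ?_ hgD0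
          rw [hC]; linarith only [mul_pos hM hA]
      _ = C * g / D := by ring
end
end

section
/- Let z : (0,∞) → (0,∞) be a C^1, monotone decreasing function satisfying z'(t) ≤ -Ψ(z(t)) for all t > 0, where Ψ ∈ C^1([0,∞)) is increasing and superquadratic (i.e., ∫_w^∞ dv/Ψ(v) < ∞ for all w > 0). Define F(w) = ∫_w^∞ dv/Ψ(v). Then F(z(t)) ≥ t for every t > 0. -/
open MeasureTheory Set Filter

noncomputable section

/-- Comparison principle: if `z` is a `C¹`, positive, decreasing function on `(0,∞)` with
`z' ≤ -Ψ(z)`, where `Ψ` is a `C¹`, increasing, positive superquadratic function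
(`∫_w^∞ dv/Ψ(v) < ∞` for all `w > 0`), then `F(z(t)) ≥ t` for every `t > 0`, where
`F(w) = ∫_w^∞ dv/Ψ(v)`. -/
theorem comparison_superquadratic (z Ψ : ℝ → ℝ)
    (hz_pos : ∀ t > (0:ℝ), 0 < z t)
    (hz_diff : ∀ t > (0:ℝ), DifferentiableAt ℝ z t)
    (hz_anti : AntitoneOn z (Set.Ioi 0))
    (hz_ode : ∀ t > (0:ℝ), deriv z t ≤ -Ψ (z t))
    (hΨ_smooth : ContDiffOn ℝ 1 Ψ (Set.Ici 0))
    (hΨ_mono : MonotoneOn Ψ (Set.Ici 0))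
    (hΨ_pos : ∀ v > (0:ℝ), 0 < Ψ v)
    (hΨ_superquad : ∀ w > (0:ℝ), IntegrableOn (fun v => 1 / Ψ v) (Set.Ioi w)) :
    ∀ t > (0:ℝ), t ≤ ∫ v in Set.Ioi (z t), 1 / Ψ v := by
  set f : ℝ → ℝ := fun v => 1 / Ψ v with hf_def
  -- continuity of f at positive points
  have hfc : ∀ x > (0:ℝ), ContinuousAt f x := by
    intro x hx
    have hΨc : ContinuousAt Ψ x :=
      (hΨ_smooth.continuousOn.continuousAt (Ici_mem_nhds hx))
    exact continuousAt_const.div hΨc (ne_of_gt (hΨ_pos x hx))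
  have hfcOn : ContinuousOn f (Set.Ioi 0) := fun x hx =>
    (hfc x hx).continuousWithinAt
  intro t ht
  have hzt := hz_pos t ht
  have key : ∀ s, 0 < s → s < t → t - s ≤ ∫ v in Set.Ioi (z t), f v := by
    intro s hs hst
    have hzs := hz_pos s hs
    have hzts : z t ≤ z s := hz_anti hs ht hst.le
    -- membership facts
    have hmem : ∀ u ∈ Set.Icc s t, z u ∈ Set.Icc (z t) (z s) := by
      intro u hu
      have hu0 : (0:ℝ) < u := lt_of_lt_of_le hs hu.1
      exact ⟨hz_anti hu0 ht hu.2, hz_anti hs hu0 hu.1⟩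
    -- g u = ∫ v in z u .. z s, f v
    set g : ℝ → ℝ := fun u => ∫ v in (z u)..(z s), f v with hg_def
    have hderiv : ∀ u ∈ Set.Icc s t,
        HasDerivAt g (-f (z u) * deriv z u) u := by
      intro u hu
      have hu0 : (0:ℝ) < u := lt_of_lt_of_le hs hu.1
      have hzu := hz_pos u hu0
      have hsub : Set.uIcc (z u) (z s) ⊆ Set.Ioi 0 := by
        rw [Set.uIcc_of_le (hmem u hu).2]
        exact fun x hx => lt_of_lt_of_le hzt (le_trans (hmem u hu).1 hx.1)
      have hii : IntervalIntegrable f volume (z u) (z s) :=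
        (hfcOn.mono hsub).intervalIntegrable
      have hmeas : StronglyMeasurableAtFilter f (nhds (z u)) :=
        ContinuousAt.stronglyMeasurableAtFilter isOpen_Ioi
          (fun x hx => hfc x hx) (z u) hzu
      have hFTC : HasDerivAt (fun x => ∫ v in x..(z s), f v) (-f (z u)) (z u) :=
        intervalIntegral.integral_hasDerivAt_left hii hmeas (hfc _ hzu)
      have hz' : HasDerivAt z (deriv z u) u := (hz_diff u hu0).hasDerivAt
      exact hFTC.comp u hz'
    -- derivative bound: 1 ≤ deriv g u on the interior
    have hbound : ∀ u ∈ interior (Set.Icc s t), (1:ℝ) ≤ deriv g u := by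
      intro u hu
      rw [interior_Icc] at hu
      have huI : u ∈ Set.Icc s t := Set.mem_Icc_of_Ioo hu
      have hu0 : (0:ℝ) < u := lt_of_lt_of_le hs huI.1
      have hzu := hz_pos u hu0
      have hΨzu := hΨ_pos _ hzu
      rw [(hderiv u huI).deriv]
      have hode := hz_ode u hu0
      have : Ψ (z u) ≤ -deriv z u := by linarith
      have : -f (z u) * deriv z u = (-deriv z u) / Ψ (z u) := by
        simp [hf_def]; ring
      rw [this, le_div_iff₀ hΨzu, one_mul]
      linarith
    have hgd : DifferentiableOn ℝ g (interior (Set.Icc s t)) := by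
      intro u hu
      rw [interior_Icc] at hu
      exact ((hderiv u (Set.mem_Icc_of_Ioo hu)).differentiableAt).differentiableWithinAt
    have hgc : ContinuousOn g (Set.Icc s t) := fun u hu =>
      ((hderiv u hu).differentiableAt).continuousAt.continuousWithinAt
    have hmain := (convex_Icc s t).mul_sub_le_image_sub_of_le_deriv hgc hgd hbound
      s (Set.left_mem_Icc.mpr hst.le) t (Set.right_mem_Icc.mpr hst.le) hst.le
    rw [one_mul] at hmain
    have hgs : g s = 0 := intervalIntegral.integral_same
    have hgt : g t = ∫ v in Set.Ioc (z t) (z s), f v :=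
      intervalIntegral.integral_of_le hzts
    -- compare with integral over Ioi (z t)
    have hint : IntegrableOn f (Set.Ioi (z t)) := hΨ_superquad (z t) hzt
    have hnn : 0 ≤ᵐ[volume.restrict (Set.Ioi (z t))] f := by
      refine (ae_restrict_iff' measurableSet_Ioi).mpr (ae_of_all _ ?_)
      intro v hv
      exact le_of_lt (one_div_pos.mpr (hΨ_pos v (lt_trans hzt hv)))
    have hsub2 : (∫ v in Set.Ioc (z t) (z s), f v) ≤ ∫ v in Set.Ioi (z t), f v :=
      setIntegral_mono_set hint hnn (HasSubset.Subset.eventuallyLE Set.Ioc_subset_Ioi_self)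
    calc t - s ≤ g t - g s := hmain
      _ = g t := by rw [hgs, sub_zero]
      _ = ∫ v in Set.Ioc (z t) (z s), f v := hgt
      _ ≤ _ := hsub2
  -- let s → 0
  refine le_of_forall_pos_le_add ?_
  intro ε hε
  have hs0 : 0 < min ε (t/2) := lt_min hε (by linarith)
  have hst : min ε (t/2) < t := lt_of_le_of_lt (min_le_right _ _) (by linarith)
  have := key (min ε (t/2)) hs0 hst
  have hmin : min ε (t/2) ≤ ε := min_le_left _ _
  linarith
end
end

section
/- sup_{ε ∈ (0,1)} ∫_{4√ε}^∞ r e^{-r^2} / (1/2 - (log r)/(log ε)) dr < ∞. -/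
open MeasureTheory Real Set

noncomputable section

/-- Key elementary inequality: for `0 ≤ t ≤ L/2 - log 4` we have `L e^{-t} ≤ 4L - 8t`. -/
lemma key_ineq {L t : ℝ} (ht : 0 ≤ t) (htL : t ≤ L / 2 - Real.log 4) :
    L * Real.exp (-t) ≤ 4 * L - 8 * t := by
  have hlog4 : (1:ℝ)/3 ≤ Real.log 4 := by
    have h2 : (0.6931471803:ℝ) < Real.log 2 := Real.log_two_gt_d9
    have : Real.log 2 ≤ Real.log 4 := Real.log_le_log (by norm_num) (by norm_num)
    linarith
  have hL : 0 < L := by nlinarith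
  rcases le_or_gt t (3 * L / 8) with h | h
  · have h1 : Real.exp (-t) ≤ 1 := Real.exp_le_one_iff.mpr (by linarith)
    nlinarith [Real.exp_pos (-t)]
  · have h1 : Real.exp (-t) ≤ Real.exp (-(3 * L / 8)) := Real.exp_le_exp.mpr (by linarith)
    have hx : 3 * L / 8 + 1 ≤ Real.exp (3 * L / 8) := Real.add_one_le_exp _
    have h3 : L * Real.exp (-(3 * L / 8)) ≤ 8 / 3 := by
      rw [Real.exp_neg]
      rw [mul_inv_le_iff₀ (Real.exp_pos _)]
      nlinarith
    have h4 : L * Real.exp (-t) ≤ L * Real.exp (-(3 * L / 8)) :=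
      mul_le_mul_of_nonneg_left h1 hL.le
    nlinarith

lemma denom_pos {ε r : ℝ} (hε0 : 0 < ε) (hε1 : ε < 1) (hr : 4 * Real.sqrt ε < r) :
    0 < 1/2 - Real.log r / Real.log ε := by
  have hlε : Real.log ε < 0 := Real.log_neg hε0 hε1
  have hs : 0 < Real.sqrt ε := Real.sqrt_pos.mpr hε0
  have hr0 : 0 < r := lt_trans (by positivity) hr
  have hlog : Real.log (4 * Real.sqrt ε) < Real.log r := Real.log_lt_log (by positivity) hr
  rw [Real.log_mul (by norm_num) (ne_of_gt hs), Real.log_sqrt hε0.le] at hlog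
  have hlog4 : (0:ℝ) < Real.log 4 := Real.log_pos (by norm_num)
  have : Real.log ε / 2 < Real.log r := by linarith
  rw [sub_pos, div_lt_iff_of_neg hlε]
  linarith

lemma pointwise_bound {ε r : ℝ} (hε0 : 0 < ε) (hε1 : ε < 1) (hr : 4 * Real.sqrt ε < r) :
    r * Real.exp (-r ^ 2) / (1/2 - Real.log r / Real.log ε)
      ≤ 8 * Real.exp (-r ^ 2) + 2 * |r| * Real.exp (-r ^ 2) := by
  have hlε : Real.log ε < 0 := Real.log_neg hε0 hε1
  have hs : 0 < Real.sqrt ε := Real.sqrt_pos.mpr hε0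
  have hr0 : 0 < r := lt_trans (by positivity) hr
  have hD := denom_pos hε0 hε1 hr
  have he : 0 < Real.exp (-r ^ 2) := Real.exp_pos _
  have hlog : Real.log (4 * Real.sqrt ε) < Real.log r := Real.log_lt_log (by positivity) hr
  rw [Real.log_mul (by norm_num) (ne_of_gt hs), Real.log_sqrt hε0.le] at hlog
  have hlog4 : (0:ℝ) < Real.log 4 := Real.log_pos (by norm_num)
  rcases le_or_gt 1 r with h1 | h1
  · -- r ≥ 1 : denominator ≥ 1/2
    have hlr : 0 ≤ Real.log r := Real.log_nonneg h1
    have hq : Real.log r / Real.log ε ≤ 0 := div_nonpos_of_nonneg_of_nonpos hlr hlε.le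
    have hDhalf : (1:ℝ)/2 ≤ 1/2 - Real.log r / Real.log ε := by linarith
    have habs : |r| = r := abs_of_pos hr0
    rw [habs, div_le_iff₀ hD]
    nlinarith [mul_le_mul_of_nonneg_left hDhalf (by positivity : (0:ℝ) ≤ 2 * r * Real.exp (-r ^ 2)),
      mul_nonneg (by positivity : (0:ℝ) ≤ 8 * Real.exp (-r ^ 2)) hD.le]
  · -- r < 1 : use the key inequality
    have hlr : Real.log r < 0 := Real.log_neg hr0 h1
    have hL : 0 < -Real.log ε := by linarith
    have key := key_ineq (L := -Real.log ε) (t := -Real.log r)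
      (by linarith) (by linarith)
    rw [neg_neg, Real.exp_log hr0] at key
    -- key : -log ε * r ≤ 4 * (-log ε) - 8 * (-log r)
    have hrD : r ≤ 8 * (1/2 - Real.log r / Real.log ε) := by
      have h8 : 8 * (1/2 - Real.log r / Real.log ε)
          = (4 * (-Real.log ε) - 8 * (-Real.log r)) / (-Real.log ε) := by
        field_simp [ne_of_lt hlε]
        ring
      rw [h8, le_div_iff₀ hL]
      nlinarith
    rw [div_le_iff₀ hD]
    nlinarith [mul_le_mul_of_nonneg_right hrD he.le,
      mul_nonneg (mul_nonneg (by positivity : (0:ℝ) ≤ 2 * |r|) he.le) hD.le]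

/-- `sup_{ε ∈ (0,1)} ∫_{4√ε}^∞ r e^{-r²} / (1/2 - log r / log ε) dr < ∞`. -/
theorem uniform_integral_bound :
    ∃ B : ℝ, ∀ ε ∈ Set.Ioo (0:ℝ) 1,
      (∫ r in Set.Ioi (4 * Real.sqrt ε),
        r * Real.exp (-r ^ 2) / (1/2 - Real.log r / Real.log ε)) ≤ B := by
  set g : ℝ → ℝ := fun r => 8 * Real.exp (-r ^ 2) + 2 * |r| * Real.exp (-r ^ 2) with hgdef
  have hexp : Integrable (fun r : ℝ => Real.exp (-r ^ 2)) := by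
    have := integrable_exp_neg_mul_sq (b := (1:ℝ)) one_pos
    simpa using this
  have hxexp : Integrable (fun r : ℝ => |r| * Real.exp (-r ^ 2)) := by
    have h := (integrable_mul_exp_neg_mul_sq (b := (1:ℝ)) one_pos).abs
    refine h.congr ?_
    filter_upwards with r
    rw [abs_mul, abs_of_pos (Real.exp_pos _)]
    norm_num
  have hgi : Integrable g := by
    refine Integrable.add (hexp.const_mul 8) ?_
    have := hxexp.const_mul 2
    refine this.congr ?_
    filter_upwards with r
    ring
  have hgnn : ∀ r, 0 ≤ g r := fun r => by positivity
  refine ⟨∫ r, g r, fun ε hε => ?_⟩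
  obtain ⟨hε0, hε1⟩ := hε
  calc (∫ r in Set.Ioi (4 * Real.sqrt ε),
        r * Real.exp (-r ^ 2) / (1/2 - Real.log r / Real.log ε))
      ≤ ∫ r in Set.Ioi (4 * Real.sqrt ε), g r := by
        refine integral_mono_of_nonneg ?_ hgi.restrict ?_
        · filter_upwards [ae_restrict_mem measurableSet_Ioi] with r hr
          have hr0 : 0 < r := lt_trans (by positivity) hr
          exact div_nonneg (by positivity) (denom_pos hε0 hε1 hr).le
        · filter_upwards [ae_restrict_mem measurableSet_Ioi] with r hr
          exact pointwise_bound hε0 hε1 hr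
    _ ≤ ∫ r, g r := setIntegral_le_integral hgi (ae_of_all _ hgnn)
end
end
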